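/- Fix a type V of nodes, a start node l₀ ∈ V, a start time t₀ ∈ ℕ, a deadline t' ∈ ℕ, battery bounds C_max, C_min ∈ ℝ, arc reduced-cost increments rc : V → V → ℝ, arc durations τ : V → V → ℕ, nodal discharges g : V → ℝ, and a function ρ : V → ℝ such that every arc energy consumption satisfies R(a, b) = ρ(b) (arrival-based consumption). For a partial route, i.e., a nonempty list P = [l₀, v₁, …, v_m] starting at l₀, define cost(P) = Σ_{j=0}^{m−1} rc(v_j, v_{j+1}) (with v₀ = l₀), time(P) = t₀ + Σ_{j=0}^{m−1} τ(v_j, v_{j+1}), and soc(P) = C_max − Σ_{j=0}^{m−1} R(v_j, v_{j+1}) − Σ_{j=1}^{m} g(v_j); call P feasible if time(P) ≤ t' and soc(Q) ≥ C_min for every nonempty prefix Q of P. Suppose P and P' are feasible partial routes starting at l₀, each with no duplicate elements, with the same last node and the same set of visited nodes, such that cost(P') < cost(P) and time(P') < time(P). Then soc(P') = soc(P), and for every list Q of nodes such that P ++ Q is feasible, P' ++ Q is feasible and cost(P' ++ Q) < cost(P ++ Q). -/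

import Mathlib

private lemma zip_tail_append {V : Type*} :
    ∀ (l Q : List V) (h : l ≠ []),
      (l ++ Q).zip (l ++ Q).tail =
        l.zip l.tail ++ (l.getLast h :: Q).zip Q
  | [], _, h => absurd rfl h
  | [a], Q, _ => by simp
  | a :: b :: t, Q, _ => by
      have ih := zip_tail_append (b :: t) Q (by simp)
      simp only [List.cons_append, List.zip_cons_cons, List.tail_cons] at *
      rw [ih]
      simp [List.getLast]

private lemma tail_append' {V : Type*} (l Q : List V) (h : l ≠ []) :
    (l ++ Q).tail = l.tail ++ Q := by
  cases l with
  | nil => exact absurd rfl h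
  | cons a t => simp

private lemma pairSum_append {V : Type*} {M : Type*} [AddCommMonoid M]
    (f : V → V → M) (l Q : List V) (h : l ≠ []) :
    (((l ++ Q).zip (l ++ Q).tail).map fun p => f p.1 p.2).sum =
      ((l.zip l.tail).map fun p => f p.1 p.2).sum +
      (((l.getLast h :: Q).zip Q).map fun p => f p.1 p.2).sum := by
  rw [zip_tail_append l Q h, List.map_append, List.sum_append]

private lemma Rsum_eq_tail {V : Type*} (R : V → V → ℝ) (ρ : V → ℝ)
    (hR : ∀ a b, R a b = ρ b) (L : List V) :
    ((L.zip L.tail).map fun p => R p.1 p.2).sum = (L.tail.map ρ).sum := by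
  have h1 : ((L.zip L.tail).map fun p => R p.1 p.2)
      = (L.zip L.tail).map (ρ ∘ Prod.snd) := by
    simp [hR, Function.comp]
  rw [h1, ← List.map_map, List.map_snd_zip]
  rw [List.length_tail]
  exact Nat.sub_le _ _



/-- Reduced cost of a partial route `P = [v₀, v₁, …, v_m]`:
`Σ_{j=0}^{m-1} rc (v j) (v (j+1))`. -/
noncomputable def routeCost {V : Type*} (rc : V → V → ℝ) (P : List V) : ℝ :=
  ((P.zip P.tail).map fun p => rc p.1 p.2).sum

/-- Arrival time of a partial route `P = [v₀, v₁, …, v_m]` starting at time `t₀`: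
`t₀ + Σ_{j=0}^{m-1} τ (v j) (v (j+1))`. -/
def routeTime {V : Type*} (τ : V → V → ℕ) (t₀ : ℕ) (P : List V) : ℕ :=
  t₀ + ((P.zip P.tail).map fun p => τ p.1 p.2).sum

/-- State of charge after a partial route `P = [v₀, v₁, …, v_m]`:
`Cmax − Σ_{j=0}^{m-1} R (v j) (v (j+1)) − Σ_{j=1}^{m} g (v j)`. -/
noncomputable def routeSoc {V : Type*} (R : V → V → ℝ) (g : V → ℝ) (Cmax : ℝ)
    (P : List V) : ℝ :=
  Cmax - ((P.zip P.tail).map fun p => R p.1 p.2).sum - (P.tail.map g).sum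

/-- A partial route is feasible if its arrival time is at most the deadline `t'` and the
state of charge of every nonempty prefix is at least `Cmin`. -/
def routeFeasible {V : Type*} (R : V → V → ℝ) (τ : V → V → ℕ) (g : V → ℝ)
    (Cmax Cmin : ℝ) (t₀ t' : ℕ) (P : List V) : Prop :=
  routeTime τ t₀ P ≤ t' ∧
  ∀ Q : List V, Q ≠ [] → Q <+: P → Cmin ≤ routeSoc R g Cmax Q

private lemma routeCost_append {V : Type*} (rc : V → V → ℝ) (l Q : List V) (h : l ≠ []) :
    routeCost rc (l ++ Q) = routeCost rc l
      + (((l.getLast h :: Q).zip Q).map fun p => rc p.1 p.2).sum := by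
  unfold routeCost; exact pairSum_append rc l Q h

private lemma routeTime_append {V : Type*} (τ : V → V → ℕ) (t₀ : ℕ) (l Q : List V) (h : l ≠ []) :
    routeTime τ t₀ (l ++ Q) = routeTime τ t₀ l
      + (((l.getLast h :: Q).zip Q).map fun p => τ p.1 p.2).sum := by
  unfold routeTime; rw [pairSum_append τ l Q h, Nat.add_assoc]

private lemma routeSoc_append {V : Type*} (R : V → V → ℝ) (g : V → ℝ) (Cmax : ℝ)
    (l Q : List V) (h : l ≠ []) :
    routeSoc R g Cmax (l ++ Q) = routeSoc R g Cmax l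
      - (((l.getLast h :: Q).zip Q).map fun p => R p.1 p.2).sum
      - (Q.map g).sum := by
  unfold routeSoc
  rw [pairSum_append R l Q h, tail_append' l Q h, List.map_append, List.sum_append]
  ring


/-- Dominance rule (ii) of Proposition 3: if arc energy consumption depends only on the
arrival node, two duplicate-free feasible partial routes starting at `l₀` that visit the
same set of nodes and end at the same node have equal states of charge; hence if one of
them has strictly smaller reduced cost and strictly earlier arrival time, every feasible
extension of the dominated route yields a feasible extension of the dominating route with
strictly smaller reduced cost. -/
theorem dominance_rule_two
    {V : Type*} (l₀ : V) (t₀ t' : ℕ) (Cmax Cmin : ℝ)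
    (rc R : V → V → ℝ) (τ : V → V → ℕ) (g : V → ℝ) (ρ : V → ℝ)
    (hR : ∀ a b : V, R a b = ρ b)
    (P P' : List V)
    (hPhead : P.head? = some l₀) (hP'head : P'.head? = some l₀)
    (hPnodup : P.Nodup) (hP'nodup : P'.Nodup)
    (hlast : P.getLast? = P'.getLast?)
    (hvisit : ∀ v : V, v ∈ P ↔ v ∈ P')
    (hPfeas : routeFeasible R τ g Cmax Cmin t₀ t' P)
    (hP'feas : routeFeasible R τ g Cmax Cmin t₀ t' P')
    (hcost : routeCost rc P' < routeCost rc P)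
    (htime : routeTime τ t₀ P' < routeTime τ t₀ P) :
    routeSoc R g Cmax P' = routeSoc R g Cmax P ∧
    ∀ Q : List V, routeFeasible R τ g Cmax Cmin t₀ t' (P ++ Q) →
      routeFeasible R τ g Cmax Cmin t₀ t' (P' ++ Q) ∧
      routeCost rc (P' ++ Q) < routeCost rc (P ++ Q) := by
  -- normalize heads
  obtain ⟨tP, rfl⟩ : ∃ t, P = l₀ :: t := by
    cases P with
    | nil => simp at hPhead
    | cons a t =>
        have ha : a = l₀ := by simpa using hPhead
        exact ⟨t, by rw [ha]⟩
  obtain ⟨tP', rfl⟩ : ∃ t, P' = l₀ :: t := by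
    cases P' with
    | nil => simp at hP'head
    | cons a t =>
        have ha : a = l₀ := by simpa using hP'head
        exact ⟨t, by rw [ha]⟩
  have hPne : (l₀ :: tP) ≠ ([] : List V) := by simp
  have hP'ne : (l₀ :: tP') ≠ ([] : List V) := by simp
  have hlastEq : (l₀ :: tP).getLast hPne = (l₀ :: tP').getLast hP'ne := by
    rw [List.getLast?_eq_getLast hPne, List.getLast?_eq_getLast hP'ne] at hlast
    exact Option.some_injective _ hlast
  -- permutation of tails
  have hl₀P : l₀ ∉ tP := (List.nodup_cons.mp hPnodup).1
  have hl₀P' : l₀ ∉ tP' := (List.nodup_cons.mp hP'nodup).1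
  have hperm : tP.Perm tP' := by
    rw [List.perm_ext_iff_of_nodup (List.nodup_cons.mp hPnodup).2
      (List.nodup_cons.mp hP'nodup).2]
    intro v
    constructor
    · intro hv
      rcases List.mem_cons.mp ((hvisit v).mp (List.mem_cons_of_mem _ hv)) with h | h
      · exact absurd (h ▸ hv) hl₀P
      · exact h
    · intro hv
      rcases List.mem_cons.mp ((hvisit v).mpr (List.mem_cons_of_mem _ hv)) with h | h
      · exact absurd (h ▸ hv) hl₀P'
      · exact h
  have hsoc : routeSoc R g Cmax (l₀ :: tP') = routeSoc R g Cmax (l₀ :: tP) := by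
    unfold routeSoc
    rw [Rsum_eq_tail R ρ hR, Rsum_eq_tail R ρ hR]
    simp only [List.tail_cons]
    rw [(hperm.map ρ).sum_eq, (hperm.map g).sum_eq]
  refine ⟨hsoc, fun Q hPQ => ?_⟩
  have hsocQ : ∀ Q₂ : List V,
      routeSoc R g Cmax ((l₀ :: tP') ++ Q₂) = routeSoc R g Cmax ((l₀ :: tP) ++ Q₂) := by
    intro Q₂
    rw [routeSoc_append R g Cmax _ Q₂ hP'ne, routeSoc_append R g Cmax _ Q₂ hPne,
      hsoc, hlastEq]
  constructor
  · constructor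
    · rw [routeTime_append τ t₀ _ Q hP'ne, ← hlastEq]
      calc routeTime τ t₀ (l₀ :: tP') + _ ≤ routeTime τ t₀ (l₀ :: tP) + _ :=
            Nat.add_le_add_right htime.le _
        _ = routeTime τ t₀ ((l₀ :: tP) ++ Q) := (routeTime_append τ t₀ _ Q hPne).symm
        _ ≤ t' := hPQ.1
    · intro Q₁ hne hpre
      by_cases hlen : Q₁.length ≤ (l₀ :: tP').length
      · exact hP'feas.2 Q₁ hne
          (List.prefix_of_prefix_length_le hpre (List.prefix_append _ _) hlen)
      · obtain ⟨Q₂, rfl⟩ := List.prefix_of_prefix_length_le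
          (List.prefix_append (l₀ :: tP') Q) hpre (le_of_not_ge hlen)
        have hQ₂ : Q₂ <+: Q := (List.prefix_append_right_inj (l₀ :: tP')).mp hpre
        rw [hsocQ Q₂]
        exact hPQ.2 ((l₀ :: tP) ++ Q₂) (by simp)
          ((List.prefix_append_right_inj (l₀ :: tP)).mpr hQ₂)
  · rw [routeCost_append rc _ Q hP'ne, routeCost_append rc _ Q hPne, ← hlastEq]
    exact add_lt_add_of_lt_of_le hcost le_rfl
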